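/- arXiv:2201.06449 — 4 statements merged into one kernel-verified Lean document; each statement's English description precedes it below -/
import Mathlib

section
/- Let N ≥ 1 be an integer, s ∈ (0,1) with N > 2s, and β > 0. Suppose U : ℝ^N → ℝ is measurable with 0 ≤ U(y) ≤ β/(1+|y|^{N+2s}) for all y. Then there exists C > 0 (depending only on N, s, β) such that for every x ∈ ℝ^N with |x| ≥ 2, ∫_{B_{|x|/2}(x)} U(y)² / |x−y|^{N−2s} dy ≤ C/(1+|x|^{2N+2s}). -/
/-!
On `B_{|x|/2}(x)` one has `|y| ≥ |x|/2`, so there `U² ≤ β² (|x|/2)^{-2(N+2s)}`. The kernel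
integral over a ball scales exactly, `∫_{B_R(x)} |x-y|^{-a} dy = R^{N-a} ∫_{B_1(0)} |y|^{-a} dy`
(translate, then dilate), and the integral on the right is finite because `a = N - 2s < N`.
Multiplying, the near-singularity integral is at most
`β² (|x|/2)^{-(2N+2s)} ∫_{B_1(0)} |y|^{-a} dy`.
-/

open MeasureTheory Metric Module

theorem preimage_sub_right_ball_zero {E : Type*} [SeminormedAddCommGroup E] (x : E) (R : ℝ) :
    (· - x) ⁻¹' ball 0 R = ball x R := by
  ext y; simp [dist_eq_norm]

theorem half_norm_le_norm_of_mem_ball {E : Type*} [SeminormedAddCommGroup E] {x y : E}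
    (hy : y ∈ ball x (‖x‖ / 2)) : ‖x‖ / 2 ≤ ‖y‖ := by
  rw [mem_ball, dist_eq_norm] at hy
  linarith [norm_sub_norm_le x y, norm_sub_rev x y]

theorem le_div_half_norm_rpow_of_mem_ball {E : Type*} [SeminormedAddCommGroup E] {x y : E}
    {β e u : ℝ} (hx : 0 < ‖x‖) (hβ : 0 ≤ β) (he : 0 ≤ e) (hy : y ∈ ball x (‖x‖ / 2))
    (hu : u ≤ β / (1 + ‖y‖ ^ e)) : u ≤ β / (‖x‖ / 2) ^ e := by
  have hxy : (‖x‖ / 2) ^ e ≤ 1 + ‖y‖ ^ e := by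
    linarith [Real.rpow_le_rpow (by positivity) (half_norm_le_norm_of_mem_ball hy) he]
  exact hu.trans (div_le_div_of_nonneg_left hβ (by positivity) hxy)

theorem div_two_rpow_neg_le {t p : ℝ} (ht : 1 ≤ t) (hp : 0 ≤ p) :
    (t / 2) ^ (-p) ≤ 2 ^ (p + 1) / (1 + t ^ p) := by
  have htp : 1 ≤ t ^ p := Real.one_le_rpow ht hp
  rw [Real.rpow_neg (by positivity), Real.div_rpow (by positivity) zero_le_two,
    Real.rpow_add_one two_ne_zero, inv_div, div_le_div_iff₀ (by positivity) (by positivity)]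
  nlinarith [Real.rpow_pos_of_pos two_pos p]

section RieszKernel

variable {E : Type*} [NormedAddCommGroup E] [NormedSpace ℝ E] [FiniteDimensional ℝ E]
  [MeasurableSpace E] [BorelSpace E] (μ : Measure E) [μ.IsAddHaarMeasure]

theorem setIntegral_ball_zero_norm_rpow {R : ℝ} (hR : 0 < R) (a : ℝ) :
    ∫ y in ball (0 : E) R, ‖y‖ ^ (-a) ∂μ =
      R ^ ((finrank ℝ E : ℝ) - a) * ∫ y in ball (0 : E) 1, ‖y‖ ^ (-a) ∂μ := by
  have h := Measure.setIntegral_comp_smul_of_pos μ (fun y : E => ‖y‖ ^ (-a)) (ball 0 1) hR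
  simp only [norm_smul, Real.norm_of_nonneg hR.le, smul_unitBall_of_pos hR,
    Real.mul_rpow hR.le (norm_nonneg _), integral_const_mul, smul_eq_mul] at h
  rw [Real.rpow_sub hR, Real.rpow_natCast, div_eq_mul_inv, ← Real.rpow_neg hR.le, mul_assoc, h]
  field_simp

theorem setIntegral_ball_norm_sub_rpow (x : E) {R : ℝ} (hR : 0 < R) (a : ℝ) :
    ∫ y in ball x R, ‖x - y‖ ^ (-a) ∂μ =
      R ^ ((finrank ℝ E : ℝ) - a) * ∫ y in ball (0 : E) 1, ‖y‖ ^ (-a) ∂μ := calc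
  _ = ∫ y in (· - x) ⁻¹' ball 0 R, ‖y - x‖ ^ (-a) ∂μ := by
    simp_rw [preimage_sub_right_ball_zero, norm_sub_rev x]
  _ = ∫ y in ball 0 R, ‖y‖ ^ (-a) ∂μ :=
    (measurePreserving_sub_right μ x).setIntegral_preimage_emb (measurableEmbedding_subRight x)
      (fun y => ‖y‖ ^ (-a)) _
  _ = _ := setIntegral_ball_zero_norm_rpow μ hR a

theorem integrableOn_ball_norm_sub_rpow (hd : 1 ≤ finrank ℝ E) (x : E) (R : ℝ) {a : ℝ}
    (ha : a < finrank ℝ E) :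
    IntegrableOn (fun y => ‖x - y‖ ^ (-a)) (ball x R) μ := by
  have h0 : IntegrableOn (fun y : E => ‖y‖ ^ (-a)) (ball 0 R) μ :=
    integrableOn_ball_of_norm_le_rpow (C := 1) hd ha
      (ae_of_all _ fun y => by simp [abs_of_nonneg (Real.rpow_nonneg (norm_nonneg y) _)])
      (measurable_norm.pow_const _).aestronglyMeasurable
  rw [← preimage_sub_right_ball_zero]
  simp_rw [norm_sub_rev x]
  exact ((measurePreserving_sub_right μ x).integrableOn_comp_preimage
    (measurableEmbedding_subRight x)).2 h0

theorem setIntegral_ball_div_norm_sub_rpow_le (hd : 1 ≤ finrank ℝ E) (x : E) {R a m : ℝ}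
    (hR : 0 < R) (ha : a < finrank ℝ E) {f : E → ℝ} (hf : AEStronglyMeasurable f μ)
    (hf0 : ∀ y ∈ ball x R, 0 ≤ f y) (hfm : ∀ y ∈ ball x R, f y ≤ m) :
    ∫ y in ball x R, f y / ‖x - y‖ ^ a ∂μ ≤
      m * R ^ ((finrank ℝ E : ℝ) - a) * ∫ y in ball (0 : E) 1, ‖y‖ ^ (-a) ∂μ := by
  have hk := integrableOn_ball_norm_sub_rpow μ hd x R ha
  simp_rw [div_eq_mul_inv, ← Real.rpow_neg (norm_nonneg _)]
  rw [mul_assoc, ← setIntegral_ball_norm_sub_rpow μ x hR, ← integral_const_mul]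
  refine setIntegral_mono_on ?_ (hk.const_mul m) measurableSet_ball fun y hy =>
    mul_le_mul_of_nonneg_right (hfm y hy) (Real.rpow_nonneg (norm_nonneg _) _)
  refine hk.bdd_mul (c := m) hf.restrict ?_
  filter_upwards [self_mem_ae_restrict measurableSet_ball] with y hy
  rw [Real.norm_of_nonneg (hf0 y hy)]
  exact hfm y hy

end RieszKernel

theorem riesz_potential_near_singularity_bound_general
    (N : ℕ) (hN : 1 ≤ N) (s : ℝ) (hs0 : 0 < s) (β : ℝ) (hβ : 0 < β)
    (U : EuclideanSpace ℝ (Fin N) → ℝ) (hU : Measurable U)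
    (hU0 : ∀ y, 0 ≤ U y)
    (hUu : ∀ y, U y ≤ β / (1 + ‖y‖ ^ ((N : ℝ) + 2 * s))) :
    ∃ C : ℝ, 0 < C ∧
      ∀ x : EuclideanSpace ℝ (Fin N), 2 ≤ ‖x‖ →
        (∫ y in ball x (‖x‖ / 2), (U y) ^ 2 / ‖x - y‖ ^ ((N : ℝ) - 2 * s)) ≤
          C / (1 + ‖x‖ ^ (2 * (N : ℝ) + 2 * s)) := by
  set e : ℝ := N + 2 * s
  set p : ℝ := 2 * N + 2 * s
  set I := ∫ y in ball (0 : EuclideanSpace ℝ (Fin N)) 1, ‖y‖ ^ (-((N : ℝ) - 2 * s))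
  have hI : 0 ≤ I := setIntegral_nonneg measurableSet_ball fun y _ => by positivity
  refine ⟨β ^ 2 * (I + 1) * 2 ^ (p + 1), by positivity, fun x hx => ?_⟩
  set R := ‖x‖ / 2
  have hR : 0 < R := by positivity
  have hdecay : ∀ y ∈ ball x R, U y ^ 2 ≤ (β / R ^ e) ^ 2 := fun y hy =>
    pow_le_pow_left₀ (hU0 y)
      (le_div_half_norm_rpow_of_mem_ball (by positivity) hβ.le (by positivity) hy (hUu y)) 2
  have hdim : finrank ℝ (EuclideanSpace ℝ (Fin N)) = N := finrank_euclideanSpace_fin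
  have hpot := setIntegral_ball_div_norm_sub_rpow_le volume (by rw [hdim]; exact hN) x hR
    (a := (N : ℝ) - 2 * s) (by rw [hdim]; linarith) (hU.pow_const 2).aestronglyMeasurable
    (fun y _ => by positivity) hdecay
  rw [hdim] at hpot
  calc _ ≤ (β / R ^ e) ^ 2 * R ^ ((N : ℝ) - (N - 2 * s)) * I := hpot
    _ = β ^ 2 * I * R ^ (-p) := by
        rw [show (N : ℝ) - (N - 2 * s) = 2 * s by ring, show -p = 2 * s - e * 2 by ring,
          Real.rpow_sub hR, Real.rpow_mul hR.le e 2, Real.rpow_two]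
        ring
    _ ≤ β ^ 2 * (I + 1) * (2 ^ (p + 1) / (1 + ‖x‖ ^ p)) := by
        have hbound : R ^ (-p) ≤ 2 ^ (p + 1) / (1 + ‖x‖ ^ p) :=
          div_two_rpow_neg_le (by linarith) (by positivity)
        exact mul_le_mul (by gcongr; linarith) hbound (Real.rpow_nonneg hR.le _)
          (mul_nonneg (sq_nonneg β) (by linarith))
    _ = _ := by ring

/-- Estimate of the contribution near the singularity of the kernel
`|x−y|^{−(N−2s)}` to the Riesz potential of `U²`. -/
theorem riesz_potential_near_singularity_bound
    (N : ℕ) (hN : 1 ≤ N) (s : ℝ) (hs0 : 0 < s) (hs1 : s < 1)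
    (hNs : 2 * s < (N : ℝ)) (β : ℝ) (hβ : 0 < β)
    (U : EuclideanSpace ℝ (Fin N) → ℝ) (hU : Measurable U)
    (hU0 : ∀ y, 0 ≤ U y)
    (hUu : ∀ y, U y ≤ β / (1 + ‖y‖ ^ ((N : ℝ) + 2 * s))) :
    ∃ C : ℝ, 0 < C ∧
      ∀ x : EuclideanSpace ℝ (Fin N), 2 ≤ ‖x‖ →
        (∫ y in ball x (‖x‖ / 2), (U y) ^ 2 / ‖x - y‖ ^ ((N : ℝ) - 2 * s)) ≤
          C / (1 + ‖x‖ ^ (2 * (N : ℝ) + 2 * s)) :=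
  riesz_potential_near_singularity_bound_general N hN s hs0 β hβ U hU hU0 hUu
end

section
/- Let N ≥ 1 be an integer, s ∈ (0,1) with N > 2s, and β > 0. Suppose U : ℝ^N → ℝ is measurable with 0 ≤ U(y) ≤ β/(1+|y|^{N+2s}) for all y. Then there exists C > 0 (depending only on N, s, β) such that for every x ∈ ℝ^N with |x| ≥ 2, ∫_{ℝ^N ∖ B_{|x|/2}(x)} U(y)² / |x−y|^{N−2s} dy ≤ C/(1+|x|^{N−2s}). -/
open MeasureTheory Metric

/-- Estimate of the contribution away from the singularity of the kernel
`|x−y|^{−(N−2s)}` to the Riesz potential of `U²`. -/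
theorem riesz_potential_far_from_singularity_bound
    (N : ℕ) (hN : 1 ≤ N) (s : ℝ) (hs0 : 0 < s) (hs1 : s < 1)
    (hNs : 2 * s < (N : ℝ)) (β : ℝ) (hβ : 0 < β)
    (U : EuclideanSpace ℝ (Fin N) → ℝ) (hU : Measurable U)
    (hU0 : ∀ y, 0 ≤ U y)
    (hUu : ∀ y, U y ≤ β / (1 + ‖y‖ ^ ((N : ℝ) + 2 * s))) :
    ∃ C : ℝ, 0 < C ∧
      ∀ x : EuclideanSpace ℝ (Fin N), 2 ≤ ‖x‖ →
        (∫ y in (ball x (‖x‖ / 2))ᶜ, (U y) ^ 2 / ‖x - y‖ ^ ((N : ℝ) - 2 * s)) ≤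
          C / (1 + ‖x‖ ^ ((N : ℝ) - 2 * s)) := by
  set p : ℝ := (N : ℝ) + 2 * s with hp
  set q : ℝ := (N : ℝ) - 2 * s with hq
  have hp0 : 0 < p := by positivity
  have hq0 : 0 < q := by simp [hq]; linarith
  have hdim : (Module.finrank ℝ (EuclideanSpace ℝ (Fin N)) : ℝ) < 2 * p := by
    simp [hp]
    push_cast
    linarith
  have hint : Integrable (fun y : EuclideanSpace ℝ (Fin N) => (1 + ‖y‖) ^ (-(2 * p))) :=
    integrable_one_add_norm hdim
  set K : ℝ := ∫ y : EuclideanSpace ℝ (Fin N), (1 + ‖y‖) ^ (-(2 * p)) with hK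
  have hK0 : 0 ≤ K := integral_nonneg fun y => by positivity
  refine ⟨2 * 2 ^ q * β ^ 2 * 4 ^ p * (K + 1), by positivity, fun x hx => ?_⟩
  have hx1 : (1 : ℝ) ≤ ‖x‖ / 2 := by linarith
  have hxq1 : (1 : ℝ) ≤ ‖x‖ ^ q := Real.one_le_rpow (by linarith) hq0.le
  -- pointwise bound on the complement set
  set g : EuclideanSpace ℝ (Fin N) → ℝ :=
    fun y => β ^ 2 * 4 ^ p * (1 + ‖y‖) ^ (-(2 * p)) / (‖x‖ / 2) ^ q with hg
  have hU2 : ∀ y, (U y) ^ 2 ≤ β ^ 2 * 4 ^ p * (1 + ‖y‖) ^ (-(2 * p)) := by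
    intro y
    have h1 : (1 + ‖y‖) ^ p ≤ 2 ^ p * (1 + ‖y‖ ^ p) := by
      rcases le_total ‖y‖ 1 with h | h
      · calc (1 + ‖y‖) ^ p ≤ (2 : ℝ) ^ p :=
              Real.rpow_le_rpow (by positivity) (by linarith) hp0.le
          _ ≤ 2 ^ p * (1 + ‖y‖ ^ p) := by
              nlinarith [Real.rpow_pos_of_pos (show (0:ℝ) < 2 by norm_num) p,
                Real.rpow_nonneg (norm_nonneg y) p]
      · calc (1 + ‖y‖) ^ p ≤ (2 * ‖y‖) ^ p :=
              Real.rpow_le_rpow (by positivity) (by linarith) hp0.le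
          _ = 2 ^ p * ‖y‖ ^ p := Real.mul_rpow (by norm_num) (norm_nonneg y)
          _ ≤ 2 ^ p * (1 + ‖y‖ ^ p) := by
              nlinarith [Real.rpow_pos_of_pos (show (0:ℝ) < 2 by norm_num) p]
    have h2 : U y ≤ β * 2 ^ p / (1 + ‖y‖) ^ p := by
      refine (hUu y).trans ?_
      rw [div_le_div_iff₀ (by positivity) (by positivity)]
      calc β * (1 + ‖y‖) ^ p ≤ β * (2 ^ p * (1 + ‖y‖ ^ p)) := by
            exact mul_le_mul_of_nonneg_left h1 hβ.le
        _ = β * 2 ^ p * (1 + ‖y‖ ^ p) := by ring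
    calc (U y) ^ 2 ≤ (β * 2 ^ p / (1 + ‖y‖) ^ p) ^ 2 :=
          pow_le_pow_left₀ (hU0 y) h2 2
      _ = β ^ 2 * 4 ^ p * (1 + ‖y‖) ^ (-(2 * p)) := by
          have h4 : ((2:ℝ) ^ p) ^ 2 = 4 ^ p := by
            rw [← Real.rpow_natCast ((2:ℝ) ^ p) 2, ← Real.rpow_mul (by norm_num : (0:ℝ) ≤ 2),
              show (4:ℝ) = 2 ^ (2:ℝ) by norm_num,
              ← Real.rpow_mul (by norm_num : (0:ℝ) ≤ 2)]
            norm_num [mul_comm]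
          have h5 : ((1 + ‖y‖) ^ p) ^ 2 = (1 + ‖y‖) ^ (2 * p) := by
            rw [← Real.rpow_natCast ((1 + ‖y‖) ^ p) 2,
              ← Real.rpow_mul (by positivity : (0:ℝ) ≤ 1 + ‖y‖)]
            norm_num [mul_comm]
          rw [div_pow, mul_pow, h4, h5, Real.rpow_neg (by positivity), div_eq_mul_inv]
  have key : (∫ y in (ball x (‖x‖ / 2))ᶜ, (U y) ^ 2 / ‖x - y‖ ^ q) ≤
      ∫ y in (ball x (‖x‖ / 2))ᶜ, g y := by
    refine integral_mono_of_nonneg (ae_of_all _ fun y => by positivity)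
      ((hint.const_mul _).div_const _).restrict ?_
    refine ae_restrict_of_forall_mem measurableSet_ball.compl fun y hy => ?_
    have hdist : ‖x‖ / 2 ≤ ‖x - y‖ := by
      have h := le_of_not_gt (mem_ball.not.mp hy)
      rwa [dist_eq_norm, norm_sub_rev] at h
    have hpow : (‖x‖ / 2) ^ q ≤ ‖x - y‖ ^ q :=
      Real.rpow_le_rpow (by positivity) hdist hq0.le
    have h3 : (U y) ^ 2 / ‖x - y‖ ^ q ≤ (U y) ^ 2 / (‖x‖ / 2) ^ q :=
      div_le_div_of_nonneg_left (by positivity) (by positivity) hpow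
    refine h3.trans ?_
    exact div_le_div_of_nonneg_right (hU2 y) (by positivity)
  have key2 : (∫ y in (ball x (‖x‖ / 2))ᶜ, g y) ≤ β ^ 2 * 4 ^ p * K / (‖x‖ / 2) ^ q := by
    have h0 := setIntegral_le_integral (s := (ball x (‖x‖ / 2))ᶜ)
        ((hint.const_mul (β ^ 2 * 4 ^ p)).div_const ((‖x‖ / 2) ^ q))
        (ae_of_all _ fun y => by dsimp only; positivity)
    refine le_trans h0 ?_
    rw [integral_div, integral_const_mul]
  have hdenom : (1 : ℝ) + ‖x‖ ^ q ≤ 2 * ‖x‖ ^ q := by linarith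
  refine (key.trans key2).trans ?_
  rw [div_le_div_iff₀ (by positivity) (by positivity)]
  have hhalf : (‖x‖ / 2) ^ q = ‖x‖ ^ q / 2 ^ q := Real.div_rpow (norm_nonneg x) (by norm_num : (0:ℝ) ≤ 2) q
  rw [hhalf]
  have h2q : (0:ℝ) < 2 ^ q := Real.rpow_pos_of_pos (by norm_num) q
  have hcancel : 2 * 2 ^ q * β ^ 2 * 4 ^ p * (K + 1) * (‖x‖ ^ q / 2 ^ q)
      = 2 * β ^ 2 * 4 ^ p * (K + 1) * ‖x‖ ^ q := by
    field_simp
  rw [hcancel]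
  have hb : (0:ℝ) ≤ β ^ 2 * 4 ^ p := by positivity
  nlinarith [mul_le_mul_of_nonneg_left hdenom (mul_nonneg hb hK0), hxq1,
    mul_nonneg hb (le_trans zero_le_one hxq1)]
end

section
/- Let N ≥ 1 be an integer and s ∈ (0,1) with N > 2s. Then there exists a constant C > 0 (depending only on N and s) such that for every d ≥ 2, ∫_{ℝ^N ∖ B_d(0)} ∫_{B_d(0)} [ (1+|x|^{N+2s}) (1+|y|^{N+2s}) ( |x|^{N+2s} − |y|^{N+2s} ) ]^{−1} dy dx ≤ C d^{−(N+4s)}. -/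
/-!
For `‖y‖ < d < ‖x‖` the kernel decouples: `√(‖x‖ - d) * √(d - ‖y‖) ≤ ‖x‖ - ‖y‖` (AM-GM) and
`‖x‖ ^ (α - 1) * (‖x‖ - ‖y‖) ≤ ‖x‖ ^ α - ‖y‖ ^ α` bound it by
`(‖x‖ ^ (2α - 1) * √(‖x‖ - d))⁻¹ * ((1 + ‖y‖ ^ α) * √(d - ‖y‖))⁻¹`, with `α = N + 2s`.
In polar coordinates the two factors integrate to `O(√d * d ^ (-(2α - N)))` outside the ball and to
`O(1 / √d)` inside it, since the square-root singularities at the sphere are integrable;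
the product is `O(d ^ (-(N + 4s)))`.
-/

open MeasureTheory Metric Set Module
open scoped ENNReal

lemma ofReal_integral_le_lintegral_ofReal {α : Type*} [MeasurableSpace α] {μ : Measure α}
    (f : α → ℝ) : ENNReal.ofReal (∫ x, f x ∂μ) ≤ ∫⁻ x, ENNReal.ofReal (f x) ∂μ := by
  by_cases hf : Integrable f μ
  · refine ENNReal.ofReal_le_of_le_toReal ?_
    rw [integral_eq_lintegral_pos_part_sub_lintegral_neg_part hf]
    exact sub_le_self _ ENNReal.toReal_nonneg
  · simp [integral_undef hf]

lemma ofReal_integral_integral_le_lintegral_mul_lintegral {α β : Type*} [MeasurableSpace α]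
    [MeasurableSpace β] {μ : Measure α} {ν : Measure β} {F : α → β → ℝ} {g : α → ℝ≥0∞}
    {h : β → ℝ≥0∞} (hg : AEMeasurable g μ) (hh : AEMeasurable h ν)
    (hF : ∀ᵐ x ∂μ, ∀ᵐ y ∂ν, ENNReal.ofReal (F x y) ≤ g x * h y) :
    ENNReal.ofReal (∫ x, ∫ y, F x y ∂ν ∂μ) ≤ (∫⁻ x, g x ∂μ) * ∫⁻ y, h y ∂ν :=
  calc ENNReal.ofReal (∫ x, ∫ y, F x y ∂ν ∂μ)
      ≤ ∫⁻ x, ENNReal.ofReal (∫ y, F x y ∂ν) ∂μ := ofReal_integral_le_lintegral_ofReal _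
    _ ≤ ∫⁻ x, ∫⁻ y, g x * h y ∂ν ∂μ := lintegral_mono_ae <| hF.mono fun _ hx =>
        (ofReal_integral_le_lintegral_ofReal _).trans (lintegral_mono_ae hx)
    _ = (∫⁻ x, g x ∂μ) * ∫⁻ y, h y ∂ν := lintegral_lintegral_mul hg hh

lemma inv_sqrt_eq_rpow {x : ℝ} (hx : 0 ≤ x) : (√x)⁻¹ = x ^ (-(1 / 2 : ℝ)) := by
  rw [Real.sqrt_eq_rpow, Real.rpow_neg hx]

lemma lintegral_Ioc_eq_ofReal_intervalIntegral {f : ℝ → ℝ} {a b : ℝ} (hab : a ≤ b)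
    (hf : IntervalIntegrable f volume a b) (hf0 : ∀ t ∈ Ioc a b, 0 ≤ f t) :
    ∫⁻ t in Ioc a b, ENNReal.ofReal (f t) = ENNReal.ofReal (∫ t in a..b, f t) := by
  rw [intervalIntegral.integral_of_le hab, ofReal_integral_eq_lintegral_ofReal hf.1
    ((ae_restrict_iff' measurableSet_Ioc).2 (ae_of_all _ hf0))]

lemma lintegral_Ioc_inv_sqrt_sub_left {a b : ℝ} (hab : a ≤ b) :
    ∫⁻ t in Ioc a b, ENNReal.ofReal (√(t - a))⁻¹ = ENNReal.ofReal (2 * √(b - a)) := by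
  have hint : IntervalIntegrable (fun t => (t - a) ^ (-(1 / 2 : ℝ))) volume a b := by
    simpa using (intervalIntegral.intervalIntegrable_rpow' (a := 0) (b := b - a)
      (r := -(1 / 2)) (by norm_num)).comp_sub_right a
  rw [setLIntegral_congr_fun measurableSet_Ioc fun t ht => by
      rw [inv_sqrt_eq_rpow (sub_nonneg.2 ht.1.le)],
    lintegral_Ioc_eq_ofReal_intervalIntegral hab hint
      fun t ht => Real.rpow_nonneg (sub_nonneg.2 ht.1.le) _,
    intervalIntegral.integral_comp_sub_right (fun u => u ^ (-(1 / 2 : ℝ))),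
    integral_rpow (Or.inl (by norm_num)), sub_self, Real.zero_rpow (by norm_num),
    Real.sqrt_eq_rpow]
  congr 1
  norm_num
  ring

lemma lintegral_Ioc_inv_sqrt_sub_right {a b : ℝ} (hab : a ≤ b) :
    ∫⁻ t in Ioc a b, ENNReal.ofReal (√(b - t))⁻¹ = ENNReal.ofReal (2 * √(b - a)) := by
  have hint : IntervalIntegrable (fun t => (b - t) ^ (-(1 / 2 : ℝ))) volume a b := by
    simpa using ((intervalIntegral.intervalIntegrable_rpow' (a := 0) (b := b - a)
      (r := -(1 / 2)) (by norm_num)).comp_sub_left b).symm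
  rw [setLIntegral_congr_fun measurableSet_Ioc fun t ht => by
      rw [inv_sqrt_eq_rpow (sub_nonneg.2 ht.2)],
    lintegral_Ioc_eq_ofReal_intervalIntegral hab hint
      fun t ht => Real.rpow_nonneg (sub_nonneg.2 ht.2) _,
    intervalIntegral.integral_comp_sub_left (fun u => u ^ (-(1 / 2 : ℝ))),
    integral_rpow (Or.inl (by norm_num)), sub_self, Real.zero_rpow (by norm_num),
    Real.sqrt_eq_rpow]
  congr 1
  norm_num
  ring

lemma lintegral_Ioi_rpow {q c : ℝ} (hq : q < -1) (hc : 0 < c) :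
    ∫⁻ r in Ioi c, ENNReal.ofReal (r ^ q) = ENNReal.ofReal (-c ^ (q + 1) / (q + 1)) := by
  rw [← integral_Ioi_rpow_of_lt hq hc, ofReal_integral_eq_lintegral_ofReal
    (integrableOn_Ioi_rpow_of_lt hq hc)]
  filter_upwards [ae_restrict_mem measurableSet_Ioi] with r hr
  exact Real.rpow_nonneg (hc.trans hr).le q

section Polar

variable {E : Type*} [NormedAddCommGroup E] [NormedSpace ℝ E] [MeasurableSpace E] [BorelSpace E]
  [FiniteDimensional ℝ E] [Nontrivial E] (μ : Measure E) [μ.IsAddHaarMeasure]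

lemma lintegral_fun_norm_addHaar {f : ℝ → ℝ≥0∞} (hf : Measurable f) :
    ∫⁻ x, f ‖x‖ ∂μ =
      finrank ℝ E * μ (ball 0 1) * ∫⁻ r in Ioi 0, ENNReal.ofReal (r ^ (finrank ℝ E - 1)) * f r := by
  calc ∫⁻ x, f ‖x‖ ∂μ = ∫⁻ x : ({(0 : E)}ᶜ : Set E), f ‖x.1‖ ∂μ.comap (↑) := by
        rw [lintegral_subtype_comap (measurableSet_singleton _).compl (fun x => f ‖x‖),
          restrict_compl_singleton]
    _ = ∫⁻ p, f p.2 ∂μ.toSphere.prod (.volumeIoiPow (finrank ℝ E - 1)) := by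
        simpa using μ.measurePreserving_homeomorphUnitSphereProd.lintegral_comp
          ((hf.comp measurable_subtype_coe).comp measurable_snd)
    _ = μ.toSphere univ * ∫⁻ r : Ioi (0 : ℝ), f r ∂.volumeIoiPow (finrank ℝ E - 1) := by
        rw [lintegral_prod _ (by fun_prop)]
        simp only [lintegral_const]
        ring
    _ = _ := by
        rw [Measure.toSphere_apply_univ, Measure.volumeIoiPow,
          lintegral_withDensity_eq_lintegral_mul (g := fun r : Ioi (0 : ℝ) => f r) _
            ((measurable_subtype_coe.pow_const _).ennreal_ofReal) (hf.comp measurable_subtype_coe)]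
        exact congrArg _ (lintegral_subtype_comap measurableSet_Ioi
          fun r => ENNReal.ofReal (r ^ (finrank ℝ E - 1)) * f r)

lemma setLIntegral_preimage_norm_addHaar {S : Set ℝ} (hS : MeasurableSet S) {f : ℝ → ℝ≥0∞}
    (hf : Measurable f) :
    ∫⁻ x in (‖·‖) ⁻¹' S, f ‖x‖ ∂μ = finrank ℝ E * μ (ball 0 1) *
      ∫⁻ r in S ∩ Ioi 0, ENNReal.ofReal (r ^ ((finrank ℝ E : ℝ) - 1)) * f r := by
  have hdim : 1 ≤ finrank ℝ E := finrank_pos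
  calc ∫⁻ x in (‖·‖) ⁻¹' S, f ‖x‖ ∂μ = ∫⁻ x, S.indicator f ‖x‖ ∂μ := by
        rw [← lintegral_indicator (measurable_norm hS)]
        rfl
    _ = _ := by
        rw [lintegral_fun_norm_addHaar μ (hf.indicator hS), ← Measure.restrict_restrict hS,
          ← lintegral_indicator hS]
        refine congrArg _ (lintegral_congr fun r => ?_)
        rw [indicator_mul_right, ← Real.rpow_natCast, Nat.cast_sub hdim, Nat.cast_one]

end Polar

lemma sqrt_sub_mul_sqrt_sub_le {r d t : ℝ} (hrd : d ≤ r) (htd : t ≤ d) :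
    √(r - d) * √(d - t) ≤ r - t := by
  nlinarith [sq_nonneg (√(r - d) - √(d - t)), Real.sq_sqrt (sub_nonneg.2 hrd),
    Real.sq_sqrt (sub_nonneg.2 htd)]

lemma rpow_sub_one_mul_sub_le_rpow_sub_rpow {α r t : ℝ} (hα : 1 ≤ α) (ht : 0 ≤ t) (htr : t ≤ r) :
    r ^ (α - 1) * (r - t) ≤ r ^ α - t ^ α := by
  have hsplit : ∀ x : ℝ, 0 ≤ x → x ^ α = x ^ (α - 1) * x := fun x hx => by
    rw [← Real.rpow_add_one' hx (by linarith), sub_add_cancel]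
  rw [hsplit r (ht.trans htr), hsplit t ht]
  nlinarith [Real.rpow_le_rpow ht htr (by linarith : 0 ≤ α - 1)]

lemma inv_one_add_rpow_mul_one_add_rpow_mul_rpow_sub_le {α d r t : ℝ} (hα : 1 ≤ α) (ht : 0 ≤ t)
    (htd : t < d) (hdr : d < r) :
    ((1 + r ^ α) * (1 + t ^ α) * (r ^ α - t ^ α))⁻¹ ≤
      (r ^ (2 * α - 1) * √(r - d))⁻¹ * ((1 + t ^ α) * √(d - t))⁻¹ := by
  have hr : 0 < r := ht.trans_lt (htd.trans hdr)
  have hr' : 0 ≤ r ^ (α - 1) := Real.rpow_nonneg hr.le _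
  have htα : 0 ≤ t ^ α := Real.rpow_nonneg ht _
  have hsqrt := mul_le_mul_of_nonneg_left (sqrt_sub_mul_sqrt_sub_le hdr.le htd.le) hr'
  have hsub := rpow_sub_one_mul_sub_le_rpow_sub_rpow hα ht (htd.trans hdr).le
  rw [← mul_inv]
  refine inv_anti₀ (mul_pos (mul_pos (Real.rpow_pos_of_pos hr _) (Real.sqrt_pos.2 (by linarith)))
    (mul_pos (by positivity) (Real.sqrt_pos.2 (by linarith)))) ?_
  calc r ^ (2 * α - 1) * √(r - d) * ((1 + t ^ α) * √(d - t))
      = r ^ α * (1 + t ^ α) * (r ^ (α - 1) * (√(r - d) * √(d - t))) := by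
        rw [show 2 * α - 1 = α + (α - 1) by ring, Real.rpow_add' hr.le (by linarith)]
        ring
    _ ≤ (1 + r ^ α) * (1 + t ^ α) * (r ^ α - t ^ α) := by
        gcongr <;> linarith

section Radial

variable {n α d : ℝ}

lemma rpow_sub_one_mul_inv_one_add_rpow_le {t : ℝ} (ht : 0 < t) :
    t ^ (n - 1) * (1 + t ^ α)⁻¹ ≤ t ^ (n - 1 - α) := by
  rw [Real.rpow_sub ht (n - 1) α, div_eq_mul_inv]
  gcongr
  linarith

lemma lintegral_rpow_sub_one_mul_inv_one_add_rpow_le (hn : 1 ≤ n) (hnα : n < α) :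
    ∫⁻ t in Ioi 0, ENNReal.ofReal (t ^ (n - 1) * (1 + t ^ α)⁻¹) ≤
      ENNReal.ofReal (1 + (α - n)⁻¹) := by
  have h_near : ∀ t ∈ Ioc (0 : ℝ) 1, ENNReal.ofReal (t ^ (n - 1) * (1 + t ^ α)⁻¹) ≤ 1 :=
    fun t ht => by
      have := Real.rpow_nonneg ht.1.le α
      exact ENNReal.ofReal_le_one.2 <| mul_le_one₀ (Real.rpow_le_one ht.1.le ht.2 (by linarith))
        (by positivity) (inv_le_one_of_one_le₀ (by linarith))
  have h_far : ∀ t ∈ Ioi (1 : ℝ), ENNReal.ofReal (t ^ (n - 1) * (1 + t ^ α)⁻¹) ≤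
      ENNReal.ofReal (t ^ (n - 1 - α)) := fun t ht =>
    ENNReal.ofReal_le_ofReal (rpow_sub_one_mul_inv_one_add_rpow_le (zero_lt_one.trans ht))
  calc ∫⁻ t in Ioi 0, ENNReal.ofReal (t ^ (n - 1) * (1 + t ^ α)⁻¹)
      ≤ (∫⁻ t in Ioc 0 1, ENNReal.ofReal (t ^ (n - 1) * (1 + t ^ α)⁻¹)) +
          ∫⁻ t in Ioi 1, ENNReal.ofReal (t ^ (n - 1) * (1 + t ^ α)⁻¹) :=
        (lintegral_mono_set Ioi_subset_Ioc_union_Ioi).trans (lintegral_union_le _ _ _)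
    _ ≤ (∫⁻ _ in Ioc (0 : ℝ) 1, 1) + ∫⁻ t in Ioi 1, ENNReal.ofReal (t ^ (n - 1 - α)) :=
        add_le_add (setLIntegral_mono' measurableSet_Ioc h_near)
          (setLIntegral_mono' measurableSet_Ioi h_far)
    _ = ENNReal.ofReal (1 + (α - n)⁻¹) := by
        have hq : -1 / (n - 1 - α + 1) = (α - n)⁻¹ := by
          rw [show n - 1 - α + 1 = -(α - n) by ring, div_neg, neg_div, neg_neg, one_div]
        rw [setLIntegral_const, Real.volume_Ioc, sub_zero, ENNReal.ofReal_one, one_mul,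
          lintegral_Ioi_rpow (by linarith) one_pos, Real.one_rpow, hq, ← ENNReal.ofReal_one,
          ← ENNReal.ofReal_add zero_le_one (inv_nonneg.2 (by linarith))]

lemma lintegral_Ioc_zero_half_rpow_sub_one_mul_inv_le (hn : 1 ≤ n) (hnα : n < α) (hd : 0 < d) :
    ∫⁻ t in Ioc 0 (d / 2), ENNReal.ofReal (t ^ (n - 1) * ((1 + t ^ α) * √(d - t))⁻¹) ≤
      ENNReal.ofReal (2 * (1 + (α - n)⁻¹) / √d) := by
  have h_bound : ∀ t ∈ Ioc 0 (d / 2), ENNReal.ofReal (t ^ (n - 1) * ((1 + t ^ α) * √(d - t))⁻¹) ≤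
      ENNReal.ofReal (2 / √d) * ENNReal.ofReal (t ^ (n - 1) * (1 + t ^ α)⁻¹) := fun t ht => by
    have hdt : √d ≤ 2 * √(d - t) := by
      rw [Real.sqrt_le_iff, mul_pow, Real.sq_sqrt (by linarith [ht.2])]
      exact ⟨by positivity, by linarith [ht.2]⟩
    have hinv : (√(d - t))⁻¹ ≤ 2 / √d := by
      rw [← inv_div]
      exact inv_anti₀ (by positivity) (by linarith)
    have := Real.rpow_nonneg ht.1.le α
    have := Real.rpow_nonneg ht.1.le (n - 1)
    rw [← ENNReal.ofReal_mul (by positivity), mul_inv, ← mul_assoc, mul_comm (2 / √d)]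
    exact ENNReal.ofReal_le_ofReal (mul_le_mul_of_nonneg_left hinv (by positivity))
  calc ∫⁻ t in Ioc 0 (d / 2), ENNReal.ofReal (t ^ (n - 1) * ((1 + t ^ α) * √(d - t))⁻¹)
      ≤ ENNReal.ofReal (2 / √d) *
          ∫⁻ t in Ioc 0 (d / 2), ENNReal.ofReal (t ^ (n - 1) * (1 + t ^ α)⁻¹) :=
        (setLIntegral_mono' measurableSet_Ioc h_bound).trans_eq
          (lintegral_const_mul' _ _ ENNReal.ofReal_ne_top)
    _ ≤ ENNReal.ofReal (2 / √d) * ENNReal.ofReal (1 + (α - n)⁻¹) := by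
        gcongr
        exact (lintegral_mono_set Ioc_subset_Ioi_self).trans
          (lintegral_rpow_sub_one_mul_inv_one_add_rpow_le hn hnα)
    _ = ENNReal.ofReal (2 * (1 + (α - n)⁻¹) / √d) := by
        rw [← ENNReal.ofReal_mul (by positivity), div_mul_eq_mul_div]

lemma lintegral_Ioc_half_rpow_sub_one_mul_inv_le (hnα : n < α) (hd : 2 ≤ d) :
    ∫⁻ t in Ioc (d / 2) d, ENNReal.ofReal (t ^ (n - 1) * ((1 + t ^ α) * √(d - t))⁻¹) ≤
      ENNReal.ofReal (4 / √d) := by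
  have hd0 : 0 < d := by linarith
  have h_bound : ∀ t ∈ Ioc (d / 2) d,
      ENNReal.ofReal (t ^ (n - 1) * ((1 + t ^ α) * √(d - t))⁻¹) ≤
        ENNReal.ofReal (2 / d) * ENNReal.ofReal (√(d - t))⁻¹ := fun t ht => by
    have ht0 : 0 < t := by linarith [ht.1]
    have hwt : t ^ (n - 1) * (1 + t ^ α)⁻¹ ≤ 2 / d := calc
      _ ≤ t ^ (n - 1 - α) := rpow_sub_one_mul_inv_one_add_rpow_le ht0
      _ ≤ t ^ (-1 : ℝ) := Real.rpow_le_rpow_of_exponent_le (by linarith [ht.1]) (by linarith)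
      _ ≤ 2 / d := by
        rw [Real.rpow_neg_one, ← inv_div]
        exact inv_anti₀ (by positivity) ht.1.le
    rw [← ENNReal.ofReal_mul (by positivity), mul_inv, ← mul_assoc]
    exact ENNReal.ofReal_le_ofReal (mul_le_mul_of_nonneg_right hwt (by positivity))
  calc ∫⁻ t in Ioc (d / 2) d, ENNReal.ofReal (t ^ (n - 1) * ((1 + t ^ α) * √(d - t))⁻¹)
      ≤ ENNReal.ofReal (2 / d) * ∫⁻ t in Ioc (d / 2) d, ENNReal.ofReal (√(d - t))⁻¹ :=
        (setLIntegral_mono' measurableSet_Ioc h_bound).trans_eq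
          (lintegral_const_mul' _ _ ENNReal.ofReal_ne_top)
    _ = ENNReal.ofReal (2 / d * (2 * √(d / 2))) := by
        rw [lintegral_Ioc_inv_sqrt_sub_right (by linarith), ← ENNReal.ofReal_mul (by positivity),
          sub_half]
    _ ≤ ENNReal.ofReal (4 / √d) := by
        refine ENNReal.ofReal_le_ofReal ?_
        have hd_sq : d = √d * √d := (Real.mul_self_sqrt hd0.le).symm
        calc 2 / d * (2 * √(d / 2)) ≤ 2 / (√d * √d) * (2 * √d) := by
              rw [← hd_sq]
              gcongr
              linarith
          _ = 4 / √d := by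
              field_simp
              ring

lemma lintegral_Ioo_rpow_sub_one_mul_inv_one_add_rpow_mul_sqrt_le (hn : 1 ≤ n) (hnα : n < α)
    (hd : 2 ≤ d) :
    ∫⁻ t in Ioo 0 d, ENNReal.ofReal (t ^ (n - 1) * ((1 + t ^ α) * √(d - t))⁻¹) ≤
      ENNReal.ofReal ((2 * (α - n)⁻¹ + 6) / √d) := by
  have hsub : Ioo 0 d ⊆ Ioc 0 (d / 2) ∪ Ioc (d / 2) d :=
    Ioo_subset_Ioc_union_Ioo.trans (union_subset_union_right _ Ioo_subset_Ioc_self)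
  refine (lintegral_mono_set hsub).trans <| (lintegral_union_le _ _ _).trans <|
    (add_le_add (lintegral_Ioc_zero_half_rpow_sub_one_mul_inv_le hn hnα (by linarith))
      (lintegral_Ioc_half_rpow_sub_one_mul_inv_le hnα hd)).trans_eq ?_
  have : 0 < (α - n)⁻¹ := inv_pos.2 (sub_pos.2 hnα)
  rw [← ENNReal.ofReal_add (by positivity) (by positivity)]
  congr 1
  ring

lemma lintegral_Ioc_rpow_neg_mul_inv_sqrt_sub_le {β : ℝ} (hβ : 0 ≤ β) (hd : 0 < d) :
    ∫⁻ r in Ioc d (2 * d), ENNReal.ofReal (r ^ (-β) * (√(r - d))⁻¹) ≤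
      ENNReal.ofReal (2 * √d * d ^ (-β)) := by
  have h_bound : ∀ r ∈ Ioc d (2 * d), ENNReal.ofReal (r ^ (-β) * (√(r - d))⁻¹) ≤
      ENNReal.ofReal (d ^ (-β)) * ENNReal.ofReal (√(r - d))⁻¹ := fun r hr => by
    rw [← ENNReal.ofReal_mul (by positivity)]
    exact ENNReal.ofReal_le_ofReal (mul_le_mul_of_nonneg_right
      (Real.rpow_le_rpow_of_nonpos hd hr.1.le (by linarith)) (by positivity))
  calc ∫⁻ r in Ioc d (2 * d), ENNReal.ofReal (r ^ (-β) * (√(r - d))⁻¹)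
      ≤ ENNReal.ofReal (d ^ (-β)) * ∫⁻ r in Ioc d (2 * d), ENNReal.ofReal (√(r - d))⁻¹ :=
        (setLIntegral_mono' measurableSet_Ioc h_bound).trans_eq
          (lintegral_const_mul' _ _ ENNReal.ofReal_ne_top)
    _ = ENNReal.ofReal (2 * √d * d ^ (-β)) := by
        rw [lintegral_Ioc_inv_sqrt_sub_left (by linarith), show 2 * d - d = d by ring,
          ← ENNReal.ofReal_mul (by positivity), mul_comm]

lemma lintegral_Ioi_two_mul_rpow_neg_mul_inv_sqrt_sub_le {β : ℝ} (hβ : 1 < β) (hd : 0 < d) :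
    ∫⁻ r in Ioi (2 * d), ENNReal.ofReal (r ^ (-β) * (√(r - d))⁻¹) ≤
      ENNReal.ofReal ((β - 1)⁻¹ * √d * d ^ (-β)) := by
  have hsd : 0 < √d := Real.sqrt_pos.2 hd
  have h_bound : ∀ r ∈ Ioi (2 * d), ENNReal.ofReal (r ^ (-β) * (√(r - d))⁻¹) ≤
      ENNReal.ofReal (√d)⁻¹ * ENNReal.ofReal (r ^ (-β)) := fun r hr => by
    have hr : d ≤ r - d := by linarith [mem_Ioi.1 hr]
    rw [← ENNReal.ofReal_mul (by positivity), mul_comm (√d)⁻¹]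
    exact ENNReal.ofReal_le_ofReal (mul_le_mul_of_nonneg_left
      (inv_anti₀ hsd (Real.sqrt_le_sqrt hr)) (Real.rpow_nonneg (by linarith) _))
  calc ∫⁻ r in Ioi (2 * d), ENNReal.ofReal (r ^ (-β) * (√(r - d))⁻¹)
      ≤ ENNReal.ofReal (√d)⁻¹ * ∫⁻ r in Ioi (2 * d), ENNReal.ofReal (r ^ (-β)) :=
        (setLIntegral_mono' measurableSet_Ioi h_bound).trans_eq
          (lintegral_const_mul' _ _ ENNReal.ofReal_ne_top)
    _ = ENNReal.ofReal ((√d)⁻¹ * ((2 * d) ^ (1 - β) / (β - 1))) := by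
        rw [lintegral_Ioi_rpow (by linarith) (by positivity), ← ENNReal.ofReal_mul (by positivity),
          show -β + 1 = -(β - 1) by ring, neg_div_neg_eq, show -(β - 1) = 1 - β by ring]
    _ ≤ ENNReal.ofReal ((β - 1)⁻¹ * √d * d ^ (-β)) := by
        refine ENNReal.ofReal_le_ofReal ?_
        have h2d : (2 * d) ^ (1 - β) ≤ d ^ (1 - β) :=
          Real.rpow_le_rpow_of_nonpos hd (by linarith) (by linarith)
        have hd1 : d ^ (1 - β) = √d * √d * d ^ (-β) := by
          rw [Real.mul_self_sqrt hd.le, sub_eq_add_neg, Real.rpow_add hd, Real.rpow_one]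
        have : 0 < β - 1 := by linarith
        calc (√d)⁻¹ * ((2 * d) ^ (1 - β) / (β - 1)) ≤ (√d)⁻¹ * (d ^ (1 - β) / (β - 1)) := by
              gcongr
          _ = (β - 1)⁻¹ * √d * d ^ (-β) := by
              rw [hd1]
              field_simp

lemma lintegral_Ioi_rpow_neg_mul_inv_sqrt_sub_le {β : ℝ} (hβ : 1 < β) (hd : 0 < d) :
    ∫⁻ r in Ioi d, ENNReal.ofReal (r ^ (-β) * (√(r - d))⁻¹) ≤
      ENNReal.ofReal ((2 + (β - 1)⁻¹) * √d * d ^ (-β)) := by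
  refine (lintegral_mono_set Ioi_subset_Ioc_union_Ioi).trans <|
    (lintegral_union_le _ _ _).trans <|
    (add_le_add (lintegral_Ioc_rpow_neg_mul_inv_sqrt_sub_le (by linarith) hd)
      (lintegral_Ioi_two_mul_rpow_neg_mul_inv_sqrt_sub_le hβ hd)).trans_eq ?_
  have : 0 < (β - 1)⁻¹ := inv_pos.2 (by linarith)
  rw [← ENNReal.ofReal_add (by positivity) (by positivity)]
  congr 1
  ring

end Radial

section Ball

variable {E : Type*} [NormedAddCommGroup E] [NormedSpace ℝ E] [MeasurableSpace E] [BorelSpace E]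
  [FiniteDimensional ℝ E] [Nontrivial E] (μ : Measure E) [μ.IsAddHaarMeasure] {α d : ℝ}

lemma lintegral_ball_inv_one_add_rpow_mul_sqrt_le (hα : (finrank ℝ E : ℝ) < α) (hd : 2 ≤ d) :
    ∫⁻ y in ball (0 : E) d, ENNReal.ofReal (((1 + ‖y‖ ^ α) * √(d - ‖y‖))⁻¹) ∂μ ≤
      finrank ℝ E * μ (ball 0 1) *
        ENNReal.ofReal ((2 * (α - finrank ℝ E)⁻¹ + 6) / √d) := by
  have hball : ball (0 : E) d = (‖·‖) ⁻¹' Iio d := by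
    ext
    simp
  rw [hball, setLIntegral_preimage_norm_addHaar μ measurableSet_Iio
    (f := fun r => ENNReal.ofReal (((1 + r ^ α) * √(d - r))⁻¹)) (by fun_prop), Iio_inter_Ioi]
  gcongr
  refine le_of_eq_of_le (setLIntegral_congr_fun measurableSet_Ioo fun t ht => ?_)
    (lintegral_Ioo_rpow_sub_one_mul_inv_one_add_rpow_mul_sqrt_le
      (by exact_mod_cast finrank_pos) hα hd)
  exact (ENNReal.ofReal_mul (Real.rpow_nonneg ht.1.le _)).symm

lemma lintegral_compl_ball_inv_rpow_mul_sqrt_le (hα : (finrank ℝ E : ℝ) + 1 < 2 * α)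
    (hd : 0 < d) :
    ∫⁻ x in (ball (0 : E) d)ᶜ, ENNReal.ofReal ((‖x‖ ^ (2 * α - 1) * √(‖x‖ - d))⁻¹) ∂μ ≤
      finrank ℝ E * μ (ball 0 1) *
        ENNReal.ofReal ((2 + (2 * α - finrank ℝ E - 1)⁻¹) * √d * d ^ (-(2 * α - finrank ℝ E))) := by
  have hcompl : (ball (0 : E) d)ᶜ = (‖·‖) ⁻¹' Ici d := by
    ext
    simp
  rw [hcompl, setLIntegral_preimage_norm_addHaar μ measurableSet_Ici
      (f := fun r => ENNReal.ofReal ((r ^ (2 * α - 1) * √(r - d))⁻¹)) (by fun_prop),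
    inter_eq_left.2 (Ici_subset_Ioi.2 hd), ← restrict_Ioi_eq_restrict_Ici]
  gcongr
  refine le_of_eq_of_le (setLIntegral_congr_fun measurableSet_Ioi fun r hr => ?_)
    (lintegral_Ioi_rpow_neg_mul_inv_sqrt_sub_le (by linarith) hd)
  have hr0 : 0 < r := hd.trans hr
  rw [← ENNReal.ofReal_mul (Real.rpow_nonneg hr0.le _), mul_inv, ← mul_assoc,
    ← Real.rpow_neg hr0.le, ← Real.rpow_add hr0]
  ring_nf

lemma ofReal_setIntegral_compl_ball_setIntegral_ball_le (hα : (finrank ℝ E : ℝ) < α)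
    (hd : 2 ≤ d) :
    ENNReal.ofReal (∫ x in (ball (0 : E) d)ᶜ, ∫ y in ball (0 : E) d,
        ((1 + ‖x‖ ^ α) * (1 + ‖y‖ ^ α) * (‖x‖ ^ α - ‖y‖ ^ α))⁻¹ ∂μ ∂μ) ≤
      (finrank ℝ E * μ (ball 0 1) *
          ENNReal.ofReal ((2 + (2 * α - finrank ℝ E - 1)⁻¹) * √d * d ^ (-(2 * α - finrank ℝ E)))) *
        (finrank ℝ E * μ (ball 0 1) * ENNReal.ofReal ((2 * (α - finrank ℝ E)⁻¹ + 6) / √d)) := by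
  have hn : (1 : ℝ) ≤ finrank ℝ E := by exact_mod_cast finrank_pos
  -- the decoupled bound fails on the sphere `‖x‖ = d`, where `(√0)⁻¹ = 0`
  have h_sphere : ∀ᵐ x ∂μ, ‖x‖ ≠ d := by
    filter_upwards [measure_eq_zero_iff_ae_notMem.1 (Measure.addHaar_sphere μ 0 d)] with x hx
    simpa using hx
  have h_kernel : ∀ᵐ x ∂μ.restrict (ball (0 : E) d)ᶜ, ∀ᵐ y ∂μ.restrict (ball (0 : E) d),
      ENNReal.ofReal ((1 + ‖x‖ ^ α) * (1 + ‖y‖ ^ α) * (‖x‖ ^ α - ‖y‖ ^ α))⁻¹ ≤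
        ENNReal.ofReal (‖x‖ ^ (2 * α - 1) * √(‖x‖ - d))⁻¹ *
          ENNReal.ofReal ((1 + ‖y‖ ^ α) * √(d - ‖y‖))⁻¹ := by
    filter_upwards [ae_restrict_mem measurableSet_ball.compl, ae_restrict_of_ae h_sphere]
      with x hx hxd
    filter_upwards [ae_restrict_mem measurableSet_ball] with y hy
    have hdx : d < ‖x‖ := lt_of_le_of_ne (by simpa using hx) (Ne.symm hxd)
    rw [← ENNReal.ofReal_mul (inv_nonneg.2 (by positivity))]
    exact ENNReal.ofReal_le_ofReal (inv_one_add_rpow_mul_one_add_rpow_mul_rpow_sub_le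
      (by linarith) (norm_nonneg y) (by simpa using hy) hdx)
  calc _ ≤ _ := ofReal_integral_integral_le_lintegral_mul_lintegral (by fun_prop) (by fun_prop)
        h_kernel
    _ ≤ _ := mul_le_mul' (lintegral_compl_ball_inv_rpow_mul_sqrt_le μ (by linarith) (by linarith))
        (lintegral_ball_inv_one_add_rpow_mul_sqrt_le μ hα hd)

lemma exists_pos_setIntegral_compl_ball_setIntegral_ball_le (hα : (finrank ℝ E : ℝ) < α) :
    ∃ C : ℝ, 0 < C ∧ ∀ d : ℝ, 2 ≤ d →
      ∫ x in (ball (0 : E) d)ᶜ, ∫ y in ball (0 : E) d,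
          ((1 + ‖x‖ ^ α) * (1 + ‖y‖ ^ α) * (‖x‖ ^ α - ‖y‖ ^ α))⁻¹ ∂μ ∂μ ≤
        C * d ^ (-(2 * α - finrank ℝ E)) := by
  have hn : (1 : ℝ) ≤ finrank ℝ E := by exact_mod_cast finrank_pos
  set κ := finrank ℝ E * μ.real (ball 0 1)
  have hκ : (finrank ℝ E : ℝ≥0∞) * μ (ball 0 1) = ENNReal.ofReal κ := by
    rw [ENNReal.ofReal_mul (by positivity), ENNReal.ofReal_natCast, ofReal_measureReal]
  have hκ0 : 0 < κ := mul_pos (by positivity)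
    (ENNReal.toReal_pos (measure_ball_pos _ _ one_pos).ne' measure_ball_lt_top.ne)
  have hA : 0 < 2 + (2 * α - finrank ℝ E - 1)⁻¹ := by
    linarith [inv_pos.2 (by linarith : 0 < 2 * α - finrank ℝ E - 1)]
  have hB : 0 < 2 * (α - finrank ℝ E)⁻¹ + 6 := by linarith [inv_pos.2 (sub_pos.2 hα)]
  refine ⟨κ ^ 2 * ((2 + (2 * α - finrank ℝ E - 1)⁻¹) * (2 * (α - finrank ℝ E)⁻¹ + 6)),
    by positivity, fun d hd => ?_⟩
  have hd0 : 0 < d := by linarith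
  rw [← ENNReal.ofReal_le_ofReal_iff (by positivity)]
  refine (ofReal_setIntegral_compl_ball_setIntegral_ball_le μ hα hd).trans_eq ?_
  rw [hκ, ← ENNReal.ofReal_mul hκ0.le, ← ENNReal.ofReal_mul hκ0.le,
    ← ENNReal.ofReal_mul' (by positivity)]
  congr 1
  field_simp [(Real.sqrt_pos.2 hd0).ne']

end Ball

theorem weighted_double_integral_upper_bound_general
    (N : ℕ) (hN : 1 ≤ N) (s : ℝ) (hs0 : 0 < s) :
    ∃ C : ℝ, 0 < C ∧
      ∀ d : ℝ, 2 ≤ d →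
        (∫ x in (ball (0 : EuclideanSpace ℝ (Fin N)) d)ᶜ,
            ∫ y in ball (0 : EuclideanSpace ℝ (Fin N)) d,
              ((1 + ‖x‖ ^ ((N : ℝ) + 2 * s)) * (1 + ‖y‖ ^ ((N : ℝ) + 2 * s)) *
                (‖x‖ ^ ((N : ℝ) + 2 * s) - ‖y‖ ^ ((N : ℝ) + 2 * s)))⁻¹) ≤
          C * d ^ (-((N : ℝ) + 4 * s)) := by
  have : Nonempty (Fin N) := ⟨⟨0, hN⟩⟩
  obtain ⟨C, hC, hbound⟩ := exists_pos_setIntegral_compl_ball_setIntegral_ball_le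
    (volume : Measure (EuclideanSpace ℝ (Fin N))) (α := N + 2 * s) (by simp [hs0])
  refine ⟨C, hC, fun d hd => ?_⟩
  have h := hbound d hd
  rwa [finrank_euclideanSpace_fin, show 2 * ((N : ℝ) + 2 * s) - N = N + 4 * s by ring] at h

/-- Weighted double-integral estimate giving the upper bound
`τ_{ε,ξ} ≤ c₂ ε^N (ε/d(ξ,∂Ω))^{N+4s}` in Lemma 4.2. -/
theorem weighted_double_integral_upper_bound
    (N : ℕ) (hN : 1 ≤ N) (s : ℝ) (hs0 : 0 < s) (hs1 : s < 1)
    (hNs : 2 * s < (N : ℝ)) :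
    ∃ C : ℝ, 0 < C ∧
      ∀ d : ℝ, 2 ≤ d →
        (∫ x in (ball (0 : EuclideanSpace ℝ (Fin N)) d)ᶜ,
            ∫ y in ball (0 : EuclideanSpace ℝ (Fin N)) d,
              ((1 + ‖x‖ ^ ((N : ℝ) + 2 * s)) * (1 + ‖y‖ ^ ((N : ℝ) + 2 * s)) *
                (‖x‖ ^ ((N : ℝ) + 2 * s) - ‖y‖ ^ ((N : ℝ) + 2 * s)))⁻¹) ≤
          C * d ^ (-((N : ℝ) + 4 * s)) :=
  weighted_double_integral_upper_bound_general N hN s hs0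
end

section
/- Let N ≥ 1 be an integer and s > 0. Then there exists a constant c > 0 (depending only on N and s) such that for every d ≥ 8 and every point ξ¹ ∈ ℝ^N with |ξ¹| = (5/4)d, one has ∫_{B_{d/8}(ξ¹)} ∫_{B_{d/8}(0)} [ (1+|x|^{N+2s}) (1+|y|^{N+2s}) |x−y|^{N+2s} ]^{−1} dy dx ≥ c d^{−(N+4s)}. -/
/-!
The two balls are `d`-separated, so on their product every factor of the denominator is at
least `1`; the integrand is therefore bounded by `1`, hence integrable. Shrinking the inner ball
to the unit ball, every point is within `2d` of the origin and of the other point, so the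
denominator is at most `4 (2d)^{2(N+2s)}`, and the integral is at least
`|B_{d/8}| |B_1| / (4 (2d)^{2N+4s}) ≍ d^N d^{-2N-4s}`.
-/

open MeasureTheory Metric

theorem mul_measureReal_le_setIntegral_setIntegral {α β : Type*} [MeasurableSpace α]
    [MeasurableSpace β] {μ : Measure α} {ν : Measure β} [SFinite μ] [SFinite ν]
    {f : α → β → ℝ} {s : Set α} {t t' : Set β} {c : ℝ}
    (hs : MeasurableSet s) (ht : MeasurableSet t) (ht' : MeasurableSet t')
    (hμs : μ s ≠ ⊤) (hνt' : ν t' ≠ ⊤) (ht't : t' ⊆ t)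
    (hf : IntegrableOn (Function.uncurry f) (s ×ˢ t) (μ.prod ν))
    (hf₀ : ∀ x ∈ s, ∀ y ∈ t, 0 ≤ f x y) (hc : ∀ x ∈ s, ∀ y ∈ t', c ≤ f x y) :
    c * ν.real t' * μ.real s ≤ ∫ x in s, ∫ y in t, f x y ∂ν ∂μ := by
  rw [IntegrableOn, ← Measure.prod_restrict] at hf
  have : IsFiniteMeasure (μ.restrict s) := isFiniteMeasure_restrict.2 hμs
  have hinner : ∀ᵐ x ∂μ.restrict s, c * ν.real t' ≤ ∫ y in t, f x y ∂ν := by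
    filter_upwards [hf.prod_right_ae, ae_restrict_mem hs] with x (hfx : IntegrableOn (f x) t ν) hx
    calc c * ν.real t' ≤ ∫ y in t', f x y ∂ν :=
          setIntegral_ge_of_const_le_real ht' hνt' (hc x hx) (hfx.mono_set ht't)
      _ ≤ ∫ y in t, f x y ∂ν :=
          setIntegral_mono_set hfx (ae_restrict_of_forall_mem ht (hf₀ x hx)) ht't.eventuallyLE
  calc c * ν.real t' * μ.real s = ∫ _ in s, c * ν.real t' ∂μ := by
        rw [setIntegral_const, smul_eq_mul, mul_comm]
    _ ≤ ∫ x in s, ∫ y in t, f x y ∂ν ∂μ :=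
        integral_mono_ae (integrable_const _) hf.integral_prod_left hinner

theorem sub_lt_norm_sub_of_mem_ball {E : Type*} [SeminormedAddCommGroup E] {a b x y : E} {r : ℝ}
    (hx : x ∈ ball a r) (hy : y ∈ ball b r) : ‖a - b‖ - 2 * r < ‖x - y‖ := by
  rw [mem_ball] at hx hy
  rw [← dist_eq_norm, ← dist_eq_norm]
  linarith [dist_triangle4 a x y b, dist_comm a x]

noncomputable def decayKernel {E : Type*} [SeminormedAddCommGroup E] (p : ℝ) (x y : E) : ℝ :=
  ((1 + ‖x‖ ^ p) * (1 + ‖y‖ ^ p) * ‖x - y‖ ^ p)⁻¹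

section decayKernel

variable {E : Type*} [SeminormedAddCommGroup E] {p : ℝ} {x y : E}

theorem decayKernel_nonneg (p : ℝ) (x y : E) : 0 ≤ decayKernel p x y := by
  unfold decayKernel; positivity

theorem decayKernel_le_one (hp : 0 ≤ p) (hxy : 1 ≤ ‖x - y‖) : decayKernel p x y ≤ 1 := by
  have h₁ : 1 ≤ 1 + ‖x‖ ^ p := le_add_of_nonneg_right (by positivity)
  have h₂ : 1 ≤ 1 + ‖y‖ ^ p := le_add_of_nonneg_right (by positivity)
  have h₃ : 1 ≤ ‖x - y‖ ^ p := Real.one_le_rpow hxy hp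
  exact inv_le_one_of_one_le₀
    (one_le_mul_of_one_le_of_one_le (one_le_mul_of_one_le_of_one_le h₁ h₂) h₃)

theorem inv_le_decayKernel {R : ℝ} (hp : 0 ≤ p) (hR : 1 ≤ R) (hx : ‖x‖ ≤ R) (hy : ‖y‖ ≤ 1)
    (hxy₀ : 0 < ‖x - y‖) (hxy : ‖x - y‖ ≤ R) :
    (4 * (R ^ p) ^ 2)⁻¹ ≤ decayKernel p x y := by
  have hRp : 1 ≤ R ^ p := Real.one_le_rpow hR hp
  have h₁ : 1 + ‖x‖ ^ p ≤ 2 * R ^ p := by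
    linarith [Real.rpow_le_rpow (norm_nonneg x) hx hp]
  have h₂ : 1 + ‖y‖ ^ p ≤ 2 := by
    linarith [Real.rpow_le_one (norm_nonneg y) hy hp]
  have h₃ : ‖x - y‖ ^ p ≤ R ^ p := Real.rpow_le_rpow (norm_nonneg _) hxy hp
  apply inv_anti₀ (by positivity)
  calc (1 + ‖x‖ ^ p) * (1 + ‖y‖ ^ p) * ‖x - y‖ ^ p ≤ (2 * R ^ p) * 2 * R ^ p := by gcongr
    _ = 4 * (R ^ p) ^ 2 := by ring

variable [MeasurableSpace E] [BorelSpace E] [SecondCountableTopology E]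

theorem measurable_decayKernel (p : ℝ) :
    Measurable (Function.uncurry (decayKernel p : E → E → ℝ)) := by
  unfold decayKernel Function.uncurry
  fun_prop

theorem integrableOn_decayKernel {μ ν : Measure E} [SFinite μ] [SFinite ν] {s t : Set E}
    (hp : 0 ≤ p) (hs : MeasurableSet s) (ht : MeasurableSet t) (hμs : μ s ≠ ⊤)
    (hνt : ν t ≠ ⊤) (hst : ∀ x ∈ s, ∀ y ∈ t, 1 ≤ ‖x - y‖) :
    IntegrableOn (Function.uncurry (decayKernel p)) (s ×ˢ t) (μ.prod ν) := by
  refine Measure.integrableOn_of_bounded (M := 1) ?_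
    (measurable_decayKernel p).aestronglyMeasurable ?_
  · rw [Measure.prod_prod]; exact ENNReal.mul_ne_top hμs hνt
  · filter_upwards [ae_restrict_mem (hs.prod ht)] with ⟨x, y⟩ ⟨hx, hy⟩
    rw [Function.uncurry_apply_pair, Real.norm_of_nonneg (decayKernel_nonneg p _ _)]
    exact decayKernel_le_one hp (hst x hx y hy)

end decayKernel

theorem double_integral_lower_bound_general
    (N : ℕ) (s : ℝ) (hs : 0 < s) :
    ∃ c : ℝ, 0 < c ∧
      ∀ d : ℝ, 8 ≤ d →
        ∀ ξ₁ : EuclideanSpace ℝ (Fin N), ‖ξ₁‖ = 5 / 4 * d →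
          c * d ^ (-((N : ℝ) + 4 * s)) ≤
            ∫ x in ball ξ₁ (d / 8),
              ∫ y in ball (0 : EuclideanSpace ℝ (Fin N)) (d / 8),
                ((1 + ‖x‖ ^ ((N : ℝ) + 2 * s)) * (1 + ‖y‖ ^ ((N : ℝ) + 2 * s)) *
                  ‖x - y‖ ^ ((N : ℝ) + 2 * s))⁻¹ := by
  set p : ℝ := N + 2 * s
  have hp : 0 ≤ p := by positivity
  set ω := volume.real (ball (0 : EuclideanSpace ℝ (Fin N)) 1)
  have hω : 0 < ω :=
    ENNReal.toReal_pos (measure_ball_pos volume 0 one_pos).ne' measure_ball_lt_top.ne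
  refine ⟨ω ^ 2 / (4 * (2 ^ p) ^ 2 * 8 ^ N), by positivity, fun d hd ξ₁ hξ₁ => ?_⟩
  have hd₀ : 0 < d := by linarith
  have hsep : ∀ x ∈ ball ξ₁ (d / 8), ∀ y ∈ ball 0 (d / 8), d ≤ ‖x - y‖ := by
    intro x hx y hy
    have hgap := sub_lt_norm_sub_of_mem_ball hx hy
    rw [sub_zero, hξ₁] at hgap
    linarith
  have hlower : ∀ x ∈ ball ξ₁ (d / 8), ∀ y ∈ ball 0 1,
      (4 * ((2 * d) ^ p) ^ 2)⁻¹ ≤ decayKernel p x y := by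
    intro x hx y hy
    have hy' : y ∈ ball 0 (d / 8) := ball_subset_ball (by linarith) hy
    have hy₁ := mem_ball_zero_iff.1 hy
    exact inv_le_decayKernel hp (by linarith) (by linarith [norm_lt_of_mem_ball hx]) hy₁.le
      (by linarith [hsep x hx y hy'])
      (by linarith [norm_sub_le x y, norm_lt_of_mem_ball hx])
  have hvol : volume.real (ball ξ₁ (d / 8)) = (d / 8) ^ N * ω := by
    rw [measureReal_def, Measure.addHaar_ball_of_pos volume ξ₁ (by positivity),
      finrank_euclideanSpace_fin, ENNReal.toReal_mul, ENNReal.toReal_ofReal (by positivity)]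
    rfl
  have hpow : d ^ (-((N : ℝ) + 4 * s)) = d ^ N / (d ^ p) ^ 2 := by
    rw [← Real.rpow_mul_natCast hd₀.le, ← Real.rpow_natCast, ← Real.rpow_sub hd₀]
    congr 1; push_cast; ring
  calc ω ^ 2 / (4 * (2 ^ p) ^ 2 * 8 ^ N) * d ^ (-((N : ℝ) + 4 * s))
      = (4 * ((2 * d) ^ p) ^ 2)⁻¹ * ω * volume.real (ball ξ₁ (d / 8)) := by
        rw [hvol, hpow, Real.mul_rpow zero_le_two hd₀.le, div_pow]; field_simp
    _ ≤ _ := mul_measureReal_le_setIntegral_setIntegral measurableSet_ball measurableSet_ball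
        measurableSet_ball measure_ball_lt_top.ne measure_ball_lt_top.ne
        (ball_subset_ball (by linarith))
        (integrableOn_decayKernel hp measurableSet_ball measurableSet_ball
          measure_ball_lt_top.ne measure_ball_lt_top.ne
          fun x hx y hy => by linarith [hsep x hx y hy])
        (fun x _ y _ => decayKernel_nonneg p x y) hlower

/-- Double-integral lower bound (with `ρ = 1/8`) giving the lower bound
`τ_{ε,ξ} ≥ c₁ ε^N (ε/d(ξ,∂Ω))^{N+4s}` in Lemma 4.2. -/
theorem double_integral_lower_bound
    (N : ℕ) (hN : 1 ≤ N) (s : ℝ) (hs : 0 < s) :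
    ∃ c : ℝ, 0 < c ∧
      ∀ d : ℝ, 8 ≤ d →
        ∀ ξ₁ : EuclideanSpace ℝ (Fin N), ‖ξ₁‖ = 5 / 4 * d →
          c * d ^ (-((N : ℝ) + 4 * s)) ≤
            ∫ x in ball ξ₁ (d / 8),
              ∫ y in ball (0 : EuclideanSpace ℝ (Fin N)) (d / 8),
                ((1 + ‖x‖ ^ ((N : ℝ) + 2 * s)) * (1 + ‖y‖ ^ ((N : ℝ) + 2 * s)) *
                  ‖x - y‖ ^ ((N : ℝ) + 2 * s))⁻¹ :=
  double_integral_lower_bound_general N s hs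
end
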